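/- arXiv:2203.04834 — 2 statements merged into one kernel-verified Lean document; each statement's English description precedes it below -/
import Mathlib

section
/- Let Γ = {φ1, …, φN} be a set of LTLf formulas over V, let A = {A1, …, AN} be propositional variables with A ∩ V = ∅, and let Ψ = ⋀_{i=1}^{N} (A_i → φ_i). For every subset C ⊆ A, the LTLf formula Ψ ∧ ⋀_{A_i ∈ C} A_i is satisfiable if and only if the LTLf formula ⋀_{i : A_i ∈ C} φ_i is satisfiable. -/
/-- Syntax of LTLf / LTL formulas (with past operators). `tt` is ⊤. -/
inductive LTLf (V : Type) : Type where
  | tt      : LTLf V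
  | var     : V → LTLf V
  | not     : LTLf V → LTLf V
  | and     : LTLf V → LTLf V → LTLf V
  | or      : LTLf V → LTLf V → LTLf V
  | next    : LTLf V → LTLf V            -- X (strong next)
  | wnext   : LTLf V → LTLf V            -- N (weak next)
  | untl    : LTLf V → LTLf V → LTLf V   -- U
  | release : LTLf V → LTLf V → LTLf V   -- R
  | ev      : LTLf V → LTLf V            -- F
  | glob    : LTLf V → LTLf V            -- G
  | yest    : LTLf V → LTLf V            -- Y
  | wyest   : LTLf V → LTLf V            -- Z
  | since   : LTLf V → LTLf V → LTLf V   -- S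
  | trigger : LTLf V → LTLf V → LTLf V   -- T
  | once    : LTLf V → LTLf V            -- O
  | hist    : LTLf V → LTLf V            -- H

variable {V W : Type}

/-- Finite-trace semantics: the trace is σ[0]…σ[n], position i (intended: i ≤ n). -/
def LTLf.finSat (σ : ℕ → Set V) (n : ℕ) : LTLf V → ℕ → Prop
  | .tt, _ => True
  | .var x, i => x ∈ σ i
  | .not φ, i => ¬ φ.finSat σ n i
  | .and φ ψ, i => φ.finSat σ n i ∧ ψ.finSat σ n i
  | .or φ ψ, i => φ.finSat σ n i ∨ ψ.finSat σ n i
  | .next φ, i => i < n ∧ φ.finSat σ n (i+1)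
  | .wnext φ, i => i = n ∨ φ.finSat σ n (i+1)
  | .untl φ ψ, i => ∃ k, i ≤ k ∧ k ≤ n ∧ ψ.finSat σ n k ∧ ∀ j, i ≤ j → j < k → φ.finSat σ n j
  | .release φ ψ, i => ¬ ∃ k, i ≤ k ∧ k ≤ n ∧ ¬ ψ.finSat σ n k ∧ ∀ j, i ≤ j → j < k → ¬ φ.finSat σ n j
  | .ev φ, i => ∃ k, i ≤ k ∧ k ≤ n ∧ φ.finSat σ n k
  | .glob φ, i => ∀ k, i ≤ k → k ≤ n → φ.finSat σ n k
  | .yest φ, i => 1 ≤ i ∧ φ.finSat σ n (i-1)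
  | .wyest φ, i => i = 0 ∨ φ.finSat σ n (i-1)
  | .since φ ψ, i => ∃ k, k ≤ i ∧ ψ.finSat σ n k ∧ ∀ j, k < j → j ≤ i → φ.finSat σ n j
  | .trigger φ ψ, i => ∀ k, k ≤ i → ψ.finSat σ n k ∨ ∃ j, k < j ∧ j ≤ i ∧ φ.finSat σ n j
  | .once φ, i => ∃ k, k ≤ i ∧ φ.finSat σ n k
  | .hist φ, i => ∀ k, k ≤ i → φ.finSat σ n k

/-- Infinite-trace (LTL) semantics. -/
def LTLf.infSat (π : ℕ → Set V) : LTLf V → ℕ → Prop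
  | .tt, _ => True
  | .var x, i => x ∈ π i
  | .not φ, i => ¬ φ.infSat π i
  | .and φ ψ, i => φ.infSat π i ∧ ψ.infSat π i
  | .or φ ψ, i => φ.infSat π i ∨ ψ.infSat π i
  | .next φ, i => φ.infSat π (i+1)
  | .wnext φ, i => φ.infSat π (i+1)
  | .untl φ ψ, i => ∃ k, i ≤ k ∧ ψ.infSat π k ∧ ∀ j, i ≤ j → j < k → φ.infSat π j
  | .release φ ψ, i => ¬ ∃ k, i ≤ k ∧ ¬ ψ.infSat π k ∧ ∀ j, i ≤ j → j < k → ¬ φ.infSat π j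
  | .ev φ, i => ∃ k, i ≤ k ∧ φ.infSat π k
  | .glob φ, i => ∀ k, i ≤ k → φ.infSat π k
  | .yest φ, i => 1 ≤ i ∧ φ.infSat π (i-1)
  | .wyest φ, i => i = 0 ∨ φ.infSat π (i-1)
  | .since φ ψ, i => ∃ k, k ≤ i ∧ ψ.infSat π k ∧ ∀ j, k < j → j ≤ i → φ.infSat π j
  | .trigger φ ψ, i => ∀ k, k ≤ i → ψ.infSat π k ∨ ∃ j, k < j ∧ j ≤ i ∧ φ.infSat π j
  | .once φ, i => ∃ k, k ≤ i ∧ φ.infSat π k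
  | .hist φ, i => ∀ k, k ≤ i → φ.infSat π k

/-- Material implication. -/
def LTLf.imp (a b : LTLf V) : LTLf V := .or a.not b

/-- Bi-implication. -/
def LTLf.iff (a b : LTLf V) : LTLf V := .and (a.imp b) (b.imp a)

/-- Variable renaming. -/
def LTLf.map (f : V → W) : LTLf V → LTLf W
  | .tt => .tt
  | .var x => .var (f x)
  | .not φ => .not (φ.map f)
  | .and φ ψ => .and (φ.map f) (ψ.map f)
  | .or φ ψ => .or (φ.map f) (ψ.map f)
  | .next φ => .next (φ.map f)
  | .wnext φ => .wnext (φ.map f)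
  | .untl φ ψ => .untl (φ.map f) (ψ.map f)
  | .release φ ψ => .release (φ.map f) (ψ.map f)
  | .ev φ => .ev (φ.map f)
  | .glob φ => .glob (φ.map f)
  | .yest φ => .yest (φ.map f)
  | .wyest φ => .wyest (φ.map f)
  | .since φ ψ => .since (φ.map f) (ψ.map f)
  | .trigger φ ψ => .trigger (φ.map f) (ψ.map f)
  | .once φ => .once (φ.map f)
  | .hist φ => .hist (φ.map f)

/-- The `end` variable used in the LTLf → LTL translation. -/
def endVar : LTLf (Option V) := .var none

/-- The translation t(·) from LTLf over `V` to LTL over `V ∪ {end}` (here `Option V`,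
with `none` playing the role of `end`). -/
def ftol : LTLf V → LTLf (Option V)
  | .tt => .tt
  | .var x => .var (some x)
  | .not φ => .not (ftol φ)
  | .and φ ψ => .and (ftol φ) (ftol ψ)
  | .or φ ψ => .or (ftol φ) (ftol ψ)
  | .next φ => .next (.and (.not endVar) (ftol φ))
  | .wnext φ => .next (.or endVar (ftol φ))
  | .untl φ ψ => .untl (ftol φ) (.and (.not endVar) (ftol ψ))
  | .release φ ψ => .release (ftol φ) (.or endVar (ftol ψ))
  | .ev φ => .ev (.and (.not endVar) (ftol φ))
  | .glob φ => .glob (.or endVar (ftol φ))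
  | .yest φ => .yest (ftol φ)
  | .wyest φ => .wyest (ftol φ)
  | .since φ ψ => .since (ftol φ) (ftol ψ)
  | .trigger φ ψ => .trigger (ftol φ) (ftol ψ)
  | .once φ => .once (ftol φ)
  | .hist φ => .hist (ftol φ)

/-- The LTL formula `F end ∧ G(end → X end) ∧ t(φ)` of Corollary 1. -/
def ftolFull (φ : LTLf V) : LTLf (Option V) :=
  .and (.ev endVar) (.and (.glob (endVar.imp (.next endVar))) (ftol φ))

/-- Conjunction of a list of formulas (⊤ for the empty list). -/
def bigAnd : List (LTLf V) → LTLf V := List.foldr .and .tt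

/-- The activation variable `A_i` (the right summand of `V ⊕ Fin N`). -/
def actVar (V : Type) (N : ℕ) (i : Fin N) : LTLf (V ⊕ Fin N) := .var (.inr i)

/-- The formula `Ψ = ⋀_{i=1}^{N} (A_i → φ_i)` over `V ∪ A`. -/
def PsiF (V : Type) (N : ℕ) (φ : Fin N → LTLf V) : LTLf (V ⊕ Fin N) :=
  bigAnd ((List.finRange N).map fun i => (actVar V N i).imp ((φ i).map Sum.inl))

/-!
Renaming variables commutes with the semantics, so the `V`-part of a trace decides the
`φ_i`. Hence a model of `Ψ ∧ ⋀_{i ∈ C} A_i`, restricted to `V`, satisfies every `φ_i` with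
`i ∈ C`; conversely a model of `⋀_{i ∈ C} φ_i`, extended by making `A_i` true at every
position exactly when `i ∈ C`, satisfies `Ψ`: the implications `A_i → φ_i` with `i ∉ C`
hold vacuously.
-/

theorem LTLf.finSat_map (f : V → W) (σ : ℕ → Set W) (n : ℕ) (φ : LTLf V) (i : ℕ) :
    (φ.map f).finSat σ n i ↔ φ.finSat (fun j => f ⁻¹' σ j) n i := by
  induction φ generalizing i <;> simp [LTLf.map, LTLf.finSat, *]

theorem finSat_bigAnd (L : List (LTLf V)) (σ : ℕ → Set V) (n i : ℕ) :
    (bigAnd L).finSat σ n i ↔ ∀ ψ ∈ L, ψ.finSat σ n i := by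
  induction L with
  | nil => simp [bigAnd, LTLf.finSat]
  | cons ψ L ih => rw [List.forall_mem_cons, ← ih]; rfl

theorem finSat_bigAnd_map_toList {α : Type} (s : Finset α) (f : α → LTLf V)
    (σ : ℕ → Set V) (n i : ℕ) :
    (bigAnd (s.toList.map f)).finSat σ n i ↔ ∀ a ∈ s, (f a).finSat σ n i := by
  simp [finSat_bigAnd]

theorem finSat_actVar (N : ℕ) (a : Fin N) (σ : ℕ → Set (V ⊕ Fin N)) (n i : ℕ) :
    (actVar V N a).finSat σ n i ↔ Sum.inr a ∈ σ i :=
  Iff.rfl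

theorem finSat_PsiF (N : ℕ) (φ : Fin N → LTLf V) (σ : ℕ → Set (V ⊕ Fin N)) (n i : ℕ) :
    (PsiF V N φ).finSat σ n i ↔
      ∀ a, Sum.inr a ∈ σ i → (φ a).finSat (fun j => Sum.inl ⁻¹' σ j) n i := by
  rw [PsiF, finSat_bigAnd, List.forall_mem_map]
  simp only [List.mem_finRange, not_true, false_or, LTLf.imp, LTLf.finSat, finSat_actVar,
    LTLf.finSat_map, imp_iff_not_or]

/-- for every subset C ⊆ A, the LTLf formula `Ψ ∧ ⋀_{A_i ∈ C} A_i` is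
satisfiable iff the LTLf formula `⋀_{i : A_i ∈ C} φ_i` is satisfiable. -/
theorem activated_sat_iff_subset_sat (V : Type) (N : ℕ) (φ : Fin N → LTLf V)
    (C : Finset (Fin N)) :
    (∃ (σ : ℕ → Set (V ⊕ Fin N)) (n : ℕ),
        ((PsiF V N φ).and (bigAnd (C.toList.map (actVar V N)))).finSat σ n 0) ↔
    (∃ (σ : ℕ → Set V) (n : ℕ), (bigAnd (C.toList.map φ)).finSat σ n 0) := by
  simp only [LTLf.finSat, finSat_PsiF, finSat_bigAnd_map_toList, finSat_actVar]
  constructor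
  · rintro ⟨σ, n, hΨ, hC⟩
    exact ⟨fun j => Sum.inl ⁻¹' σ j, n, fun a ha => hΨ a (hC a ha)⟩
  · rintro ⟨σ, n, h⟩
    let σ' : ℕ → Set (V ⊕ Fin N) := fun j => Sum.inl '' σ j ∪ Sum.inr '' C
    have hσ' : (fun j => Sum.inl ⁻¹' σ' j) = σ := by
      funext j; ext v; simp [σ']
    refine ⟨σ', n, fun a ha => hσ' ▸ h a ?_, fun a ha => Or.inr ⟨a, ha, rfl⟩⟩
    simpa [σ'] using ha
end

section
/- Let φ be an LTL formula over V and let p ∉ V be a fresh propositional variable. (1) For every infinite trace π' over V ∪ {p} such that π' ⊨ ¬p ∧ G(X p ↔ φ), and for every index i ≥ 1: π',i ⊨ p if and only if π',i−1 ⊨ φ (equivalently, iff π',i ⊨ Y φ). (2) Every infinite trace π over V can be extended to an infinite trace π' over V ∪ {p} agreeing with π on V such that π' ⊨ ¬p ∧ G(X p ↔ φ). Consequently, there exist an infinite trace and an index i ≥ 1 at which Y φ holds if and only if there exist an infinite trace π' with π' ⊨ ¬p ∧ G(X p ↔ φ) and an index i ≥ 1 with π',i ⊨ p. -/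
variable {V W : Type}

/-- The monitor formula `¬p ∧ G(X p ↔ φ)` for `Y φ`, where the fresh variable p is
`none` in `Option V` and φ is lifted to `V ∪ {p}` via `map some`. -/
def yMonitor (φ : LTLf V) : LTLf (Option V) :=
  .and (LTLf.var none).not (.glob ((LTLf.next (.var none)).iff (φ.map some)))

lemma map_infSat {V W : Type} (f : V → W) (φ : LTLf V) (π : ℕ → Set W) (i : ℕ) :
    (φ.map f).infSat π i ↔ φ.infSat (fun j => f ⁻¹' π j) i := by
  induction φ generalizing i <;>
    simp_all [LTLf.map, LTLf.infSat, Set.preimage]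

/-- correctness of the monitor for Y (yesterday).
(1) On any trace satisfying the monitor, at every i ≥ 1, p holds iff φ held at i−1
(equivalently, iff Y φ holds at i).
(2) Every trace over V extends (agreeing on V) to one satisfying the monitor.
(3) Consequently Y φ is "reachable" iff p is, under the monitor. -/
theorem yesterday_monitor (V : Type) (φ : LTLf V) :
    (∀ π' : ℕ → Set (Option V), (yMonitor φ).infSat π' 0 →
      ∀ i : ℕ, 1 ≤ i →
        (((LTLf.var none : LTLf (Option V)).infSat π' i ↔ (φ.map some).infSat π' (i-1)) ∧
         ((LTLf.var none : LTLf (Option V)).infSat π' i ↔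
            (LTLf.yest (φ.map some)).infSat π' i)))
    ∧
    (∀ π : ℕ → Set V, ∃ π' : ℕ → Set (Option V),
        (∀ i, {x : V | some x ∈ π' i} = π i) ∧ (yMonitor φ).infSat π' 0)
    ∧
    ((∃ (π : ℕ → Set V) (i : ℕ), 1 ≤ i ∧ (LTLf.yest φ).infSat π i) ↔
     (∃ (π' : ℕ → Set (Option V)) (i : ℕ), 1 ≤ i ∧ (yMonitor φ).infSat π' 0 ∧
        (LTLf.var none : LTLf (Option V)).infSat π' i)) := by

  have mon : ∀ π' : ℕ → Set (Option V), (yMonitor φ).infSat π' 0 ↔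
      ((none ∉ π' 0) ∧ ∀ k, ((φ.map some).infSat π' k ↔ none ∈ π' (k+1))) := by
    intro π'
    simp only [yMonitor, LTLf.iff, LTLf.imp, LTLf.infSat]
    constructor
    · rintro ⟨h0, hg⟩
      refine ⟨h0, fun k => ?_⟩
      have := hg k (Nat.zero_le k)
      tauto
    · rintro ⟨h0, hg⟩
      refine ⟨h0, fun k _ => ?_⟩
      have := hg k
      tauto
  have part1 : ∀ π' : ℕ → Set (Option V), (yMonitor φ).infSat π' 0 →
      ∀ i : ℕ, 1 ≤ i →
        (((LTLf.var none : LTLf (Option V)).infSat π' i ↔ (φ.map some).infSat π' (i-1)) ∧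
         ((LTLf.var none : LTLf (Option V)).infSat π' i ↔
            (LTLf.yest (φ.map some)).infSat π' i)) := by
    intro π' h i hi
    obtain ⟨h0, hg⟩ := (mon π').mp h
    have hk := hg (i-1)
    have hi1 : i - 1 + 1 = i := Nat.succ_pred_eq_of_pos hi
    rw [hi1] at hk
    constructor
    · exact hk.symm
    · simp only [LTLf.infSat]
      constructor
      · intro hp; exact ⟨hi, hk.mpr hp⟩
      · rintro ⟨_, hφ⟩; exact hk.mp hφ
  have part2 : ∀ π : ℕ → Set V, ∃ π' : ℕ → Set (Option V),
      (∀ i, {x : V | some x ∈ π' i} = π i) ∧ (yMonitor φ).infSat π' 0 := by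
    intro π
    refine ⟨fun i => (some '' π i) ∪ {o | o = none ∧ 1 ≤ i ∧ φ.infSat π (i-1)}, ?_, ?_⟩
    · intro i; ext x; simp
    · rw [mon]
      constructor
      · simp
      · intro k
        rw [map_infSat]
        have hrestr : (fun j => (some : V → Option V) ⁻¹'
            ((some '' π j) ∪ {o | o = none ∧ 1 ≤ j ∧ φ.infSat π (j-1)})) = π := by
          funext j; ext x; simp
        rw [hrestr]
        simp [Nat.add_sub_cancel]
  refine ⟨part1, part2, ?_⟩
  constructor
  · rintro ⟨π, i, hi, hY⟩
    obtain ⟨π', hres, hmon⟩ := part2 π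
    refine ⟨π', i, hi, hmon, ?_⟩
    have := (part1 π' hmon i hi).1
    rw [this, map_infSat]
    have : (fun j => (some : V → Option V) ⁻¹' π' j) = π := by
      funext j; ext x
      have := hres j
      constructor
      · intro hx; rw [← this]; exact hx
      · intro hx; rw [← this] at hx; exact hx
    rw [this]
    exact hY.2
  · rintro ⟨π', i, hi, hmon, hp⟩
    refine ⟨fun j => {x | some x ∈ π' j}, i, hi, hi, ?_⟩
    have := (part1 π' hmon i hi).1.mp hp
    rw [map_infSat] at this
    exact this
end
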